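/- arXiv:1604.01958 — 11 statements merged into one kernel-verified Lean document; each statement's English description precedes it below -/
import Mathlib

section
/- Let k be a field of characteristic zero, let u_1,…,u_m ∈ ℤ[x]^n, and let θ_U : AddMonoidAlgebra k (ℕ[x]^m) → AddMonoidAlgebra k (ℤ[x]^n) be the monomial substitution homomorphism determined by θ_U(Y^w) = T^{∑_i w_i·u_i}. Let Syz(U) = {f ∈ ℤ[x]^m : ∑_{i=1}^m f_i·u_i = 0}. Then the kernel of θ_U equals the ideal of AddMonoidAlgebra k (ℕ[x]^m) generated by the binomials Y^{f⁺} − Y^{f⁻} for f ∈ Syz(U). (Lemma 4.2: the vanishing ideal of the toric difference variety X_U is the toric difference ideal with support lattice Syz(U).) -/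
/-!
Since `θ_U` is induced by the monoid map `φ = expMap u`, its kernel is spanned by the binomials
`Y^a - Y^b` with `φ a = φ b`: if `s` picks a point in each fibre of `φ`, then `p - (s ∘ φ)_* p` is a
combination of such binomials, and `(s ∘ φ)_* p = s_* (θ_U p)` vanishes for `p` in the kernel.
Each such binomial factors as `Y^c (Y^{f⁺} - Y^{f⁻})` with `c` the coefficientwise minimum of
`a` and `b`, and `f = a - b` is a syzygy of `U`.
-/

open Polynomial AddMonoidAlgebra

/-- The coefficientwise positive part of an integer polynomial, as a polynomial over ℕ. -/
noncomputable def polyPos (p : Polynomial ℤ) : Polynomial ℕ :=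
  ⟨.ofCoeff (p.toFinsupp.coeff.mapRange Int.toNat Int.toNat_zero)⟩

/-- The coefficientwise positive part of a vector of integer polynomials. -/
noncomputable def vecPos {m : ℕ} (f : Fin m → Polynomial ℤ) : Fin m → Polynomial ℕ :=
  fun i => polyPos (f i)

/-- The coefficientwise negative part of a vector of integer polynomials. -/
noncomputable def vecNeg {m : ℕ} (f : Fin m → Polynomial ℤ) : Fin m → Polynomial ℕ :=
  fun i => polyPos (-(f i))

/-- The additive monoid homomorphism `ℕ[x]^m →+ ℤ[x]^n`, `w ↦ ∑ i, w i • u i`,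
where `ℕ[x]` acts on `ℤ[x]^n` through the inclusion `ℕ[x] → ℤ[x]`. -/
noncomputable def expMap {m n : ℕ} (u : Fin m → Fin n → Polynomial ℤ) :
    (Fin m → Polynomial ℕ) →+ (Fin n → Polynomial ℤ) where
  toFun w := ∑ i, ((w i).map (Nat.castRingHom ℤ)) • u i
  map_zero' := by simp
  map_add' a b := by
    simp only [Pi.add_apply, Polynomial.map_add, add_smul]
    exact Finset.sum_add_distrib

/-- The monomial substitution homomorphism `θ_U` with `θ_U(Y^w) = T^{∑ i, w i • u i}`. -/
noncomputable def thetaU (k : Type*) [CommRing k] {m n : ℕ}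
    (u : Fin m → Fin n → Polynomial ℤ) :
    AddMonoidAlgebra k (Fin m → Polynomial ℕ) →ₐ[k]
      AddMonoidAlgebra k (Fin n → Polynomial ℤ) :=
  AddMonoidAlgebra.mapDomainAlgHom k k (expMap u)

theorem AddMonoidAlgebra.mapDomain_comp {R M N O : Type*} [Semiring R] (f : M → N) (g : N → O)
    (p : AddMonoidAlgebra R M) : mapDomain (g ∘ f) p = mapDomain g (mapDomain f p) :=
  coeff_injective <| by simp only [coeff_mapDomain, Finsupp.mapDomain_comp]

section Binomial

variable {k M N : Type*} [CommRing k] [AddMonoid M]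

theorem AddMonoidAlgebra.single_add_sub_single_add (c a b : M) :
    (single (c + a) 1 - single (c + b) 1 : AddMonoidAlgebra k M) =
      single c 1 * (single a 1 - single b 1) := by
  rw [mul_sub, single_mul_single, single_mul_single, one_mul]

theorem AddMonoidAlgebra.sub_mapDomain_mem_span_binomials {ψ : M → M} (φ : M → N)
    (hψ : ∀ a, φ (ψ a) = φ a) (p : AddMonoidAlgebra k M) :
    p - mapDomain ψ p ∈
      Ideal.span {q | ∃ a b, φ a = φ b ∧ q = single a (1 : k) - single b 1} := by
  induction p using AddMonoidAlgebra.induction_linear with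
  | zero => simp
  | add p q hp hq =>
    rw [mapDomain_add, add_sub_add_comm]
    exact add_mem hp hq
  | single a r =>
    rw [mapDomain_single, ← mul_one r, ← smul_eq_mul, ← smul_single, ← smul_single, ← smul_sub]
    refine Submodule.smul_of_tower_mem _ r (Ideal.subset_span ?_)
    exact ⟨a, ψ a, (hψ a).symm, rfl⟩

theorem AddMonoidAlgebra.ker_mapDomainAlgHom [AddMonoid N] (φ : M →+ N) :
    RingHom.ker (mapDomainAlgHom k k φ) =
      Ideal.span {p | ∃ a b, φ a = φ b ∧ p = single a (1 : k) - single b 1} := by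
  refine le_antisymm (fun p hp => ?_) (Ideal.span_le.2 ?_)
  · have hσ : ∀ a, φ (Function.invFun φ (φ a)) = φ a := fun a => Function.invFun_eq ⟨a, rfl⟩
    rw [RingHom.mem_ker, mapDomainAlgHom_apply] at hp
    have := sub_mapDomain_mem_span_binomials (ψ := Function.invFun φ ∘ φ) φ hσ p
    rwa [mapDomain_comp, hp, mapDomain_zero, sub_zero] at this
  · rintro _ ⟨a, b, hab, rfl⟩
    simp only [SetLike.mem_coe, RingHom.mem_ker, map_sub, mapDomainAlgHom_apply, mapDomain_single,
      hab, sub_self]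

end Binomial

theorem polyPos_coeff (p : ℤ[X]) (j : ℕ) : (polyPos p).coeff j = (p.coeff j).toNat := rfl

theorem map_polyPos_sub_map_polyPos_neg (p : ℤ[X]) :
    (polyPos p).map (Nat.castRingHom ℤ) - (polyPos (-p)).map (Nat.castRingHom ℤ) = p := by
  ext j
  simp only [Polynomial.coeff_sub, Polynomial.coeff_map, polyPos_coeff, Polynomial.coeff_neg,
    eq_natCast]
  omega

theorem exists_eq_add_polyPos_and_eq_add_polyPos_neg (p q : ℕ[X]) :
    ∃ c r, p = c + polyPos r ∧ q = c + polyPos (-r) := by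
  let c : ℕ[X] := ⟨.ofCoeff (p.toFinsupp.coeff ⊓ q.toFinsupp.coeff)⟩
  have hc (j : ℕ) : c.coeff j = min (p.coeff j) (q.coeff j) := rfl
  refine ⟨c, p.map (Nat.castRingHom ℤ) - q.map (Nat.castRingHom ℤ), ?_, ?_⟩ <;>
  · ext j
    simp only [Polynomial.coeff_add, hc, polyPos_coeff, Polynomial.coeff_neg,
      Polynomial.coeff_sub, Polynomial.coeff_map, eq_natCast]
    omega

theorem exists_eq_add_vecPos_and_eq_add_vecNeg {m : ℕ} (a b : Fin m → ℕ[X]) :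
    ∃ c f, a = c + vecPos f ∧ b = c + vecNeg f := by
  choose c f h using fun i => exists_eq_add_polyPos_and_eq_add_polyPos_neg (a i) (b i)
  exact ⟨c, f, funext fun i => (h i).1, funext fun i => (h i).2⟩

theorem expMap_vecPos_eq_expMap_vecNeg_iff {m n : ℕ} (u : Fin m → Fin n → ℤ[X])
    (f : Fin m → ℤ[X]) : expMap u (vecPos f) = expMap u (vecNeg f) ↔ ∑ i, f i • u i = 0 := by
  rw [← sub_eq_zero]
  simp only [expMap, AddMonoidHom.coe_mk, ZeroHom.coe_mk, ← Finset.sum_sub_distrib, ← sub_smul,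
    vecPos, vecNeg, map_polyPos_sub_map_polyPos_neg]

theorem kernel_thetaU_eq_syzygy_lattice_ideal_general
    (k : Type*) [Field k] {m n : ℕ}
    (u : Fin m → Fin n → Polynomial ℤ) :
    RingHom.ker (thetaU k u) =
      Ideal.span ((fun f => (AddMonoidAlgebra.single (vecPos f) 1 :
            AddMonoidAlgebra k (Fin m → Polynomial ℕ)) - AddMonoidAlgebra.single (vecNeg f) 1) ''
        {f : Fin m → Polynomial ℤ | ∑ i, f i • u i = 0}) := by
  rw [thetaU, ker_mapDomainAlgHom]
  apply le_antisymm <;> rw [Ideal.span_le]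
  · rintro _ ⟨a, b, hab, rfl⟩
    obtain ⟨c, f, rfl, rfl⟩ := exists_eq_add_vecPos_and_eq_add_vecNeg a b
    rw [map_add, map_add, add_right_inj, expMap_vecPos_eq_expMap_vecNeg_iff] at hab
    rw [SetLike.mem_coe, single_add_sub_single_add]
    exact Ideal.mul_mem_left _ _ (Ideal.subset_span ⟨f, hab, rfl⟩)
  · rintro _ ⟨f, hf, rfl⟩
    exact Ideal.subset_span ⟨_, _, (expMap_vecPos_eq_expMap_vecNeg_iff u f).2 hf, rfl⟩

/-- Lemma 4.2: the kernel of `θ_U` is the binomial ideal generated by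
`Y^{f⁺} - Y^{f⁻}` for `f` in the syzygy lattice `Syz(U)`. -/
theorem kernel_thetaU_eq_syzygy_lattice_ideal
    (k : Type*) [Field k] [CharZero k] {m n : ℕ}
    (u : Fin m → Fin n → Polynomial ℤ) :
    RingHom.ker (thetaU k u) =
      Ideal.span ((fun f => (AddMonoidAlgebra.single (vecPos f) 1 :
            AddMonoidAlgebra k (Fin m → Polynomial ℕ)) - AddMonoidAlgebra.single (vecNeg f) 1) ''
        {f : Fin m → Polynomial ℤ | ∑ i, f i • u i = 0}) :=
  kernel_thetaU_eq_syzygy_lattice_ideal_general k u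
end

section
/- Let k be a field of characteristic zero, let u_1,…,u_m ∈ ℤ[x]^n, and let θ_U : AddMonoidAlgebra k (ℕ[x]^m) → AddMonoidAlgebra k (ℤ[x]^n) be the monomial substitution homomorphism with θ_U(Y^w) = T^{∑_i w_i·u_i}. Let S = ℕ[x]({u_1,…,u_m}) = {∑_{i=1}^m g_i·u_i : g_i ∈ ℕ[x]} be the affine ℕ[x]-semimodule generated by the u_i. Then the range of θ_U equals the k-linear span of the monomials {T^u : u ∈ S} inside AddMonoidAlgebra k (ℤ[x]^n); consequently θ_U induces a k-algebra isomorphism (AddMonoidAlgebra k (ℕ[x]^m)) / ker θ_U ≅ k[S], i.e., the difference coordinate ring of the toric difference variety X_U is the semimodule algebra k[S]. (Core of Theorem 3.5.) -/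
open Polynomial AddMonoidAlgebra

/-- The affine `ℕ[x]`-semimodule `S = ℕ[x]({u_1,…,u_m})` generated by `u_1,…,u_m`,
as an additive submonoid of `ℤ[x]^n`. -/
noncomputable def genSemimodule {m n : ℕ} (u : Fin m → Fin n → Polynomial ℤ) :
    AddSubmonoid (Fin n → Polynomial ℤ) where
  carrier := {x | ∃ g : Fin m → Polynomial ℕ, x = ∑ i, ((g i).map (Nat.castRingHom ℤ)) • u i}
  zero_mem' := ⟨0, by simp⟩
  add_mem' := by
    rintro a b ⟨g, rfl⟩ ⟨h, rfl⟩
    exact ⟨g + h, by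
      simp only [Pi.add_apply, Polynomial.map_add, add_smul]
      rw [Finset.sum_add_distrib]⟩

/-! `θ_U` is `mapDomain` along `expMap u`, whose image is `S`. Pushing forward along any map
`f` hits exactly the span of the monomials over `range f`. Factoring `f` as the surjection onto
its range followed by the inclusion, `mapDomain` turns it into a surjective algebra map followed
by an injective one, so the kernel is that of the surjection onto `k[range f]`, and the first
isomorphism theorem applies. -/

namespace AddMonoidAlgebra

variable {R M N P : Type*}

section Semiring

variable [Semiring R]

lemma mapDomain_surjective {f : M → N} (hf : Function.Surjective f) :
    Function.Surjective (mapDomain (R := R) f) := fun y ↦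
  let ⟨x, hx⟩ := Finsupp.mapDomain_surjective hf y.coeff
  ⟨ofCoeff x, coeff_injective hx⟩

lemma range_mapDomain_eq_span_single (f : M → N) :
    Set.range (mapDomain (R := R) f) =
      Submodule.span R {a : R[N] | ∃ n ∈ Set.range f, a = single n 1} := by
  apply le_antisymm
  · rintro _ ⟨x, rfl⟩
    induction x using AddMonoidAlgebra.induction_linear with
    | zero => simp
    | add x y hx hy => rw [mapDomain_add]; exact add_mem hx hy
    | single m r =>
      rw [mapDomain_single, ← mul_one r, ← smul_eq_mul, ← smul_single]
      exact Submodule.smul_mem _ _ (Submodule.subset_span ⟨f m, ⟨m, rfl⟩, rfl⟩)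
  · show _ ≤ (LinearMap.range (mapDomainLinearMap R R f) : Set R[N])
    rw [SetLike.coe_subset_coe, Submodule.span_le]
    rintro _ ⟨_, ⟨m, rfl⟩, rfl⟩
    exact ⟨single m 1, by simp⟩

end Semiring

variable [AddMonoid M] [AddMonoid N] [AddMonoid P]

lemma ker_mapDomainAlgHom_comp_of_injective [CommSemiring R] (g : M →+ N) {h : N →+ P}
    (hh : Function.Injective h) :
    RingHom.ker (mapDomainAlgHom R R (h.comp g)) = RingHom.ker (mapDomainAlgHom R R g) := by
  ext x
  rw [RingHom.mem_ker, RingHom.mem_ker, mapDomainAlgHom_comp, AlgHom.comp_apply,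
    map_eq_zero_iff _ (mapDomain_injective hh)]

noncomputable def quotientKerMapDomainAlgHomEquiv [CommRing R] (f : M →+ N) :
    (R[M] ⧸ RingHom.ker (mapDomainAlgHom R R f)) ≃ₐ[R] R[AddMonoidHom.mrange f] :=
  have hf : (AddMonoidHom.mrange f).subtype.comp f.mrangeRestrict = f := by ext; rfl
  (Ideal.quotientEquivAlgOfEq R (hf ▸
      ker_mapDomainAlgHom_comp_of_injective f.mrangeRestrict Subtype.val_injective)).trans <|
    Ideal.quotientKerAlgEquivOfSurjective <| mapDomain_surjective f.mrangeRestrict_surjective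

end AddMonoidAlgebra

lemma genSemimodule_eq_mrange {m n : ℕ} (u : Fin m → Fin n → Polynomial ℤ) :
    genSemimodule u = AddMonoidHom.mrange (expMap u) :=
  AddSubmonoid.ext fun _ ↦ exists_congr fun _ ↦ eq_comm

theorem range_thetaU_eq_span_semimodule_monomials_general
    (k : Type*) [Field k] {m n : ℕ}
    (u : Fin m → Fin n → Polynomial ℤ) :
    (Set.range (thetaU k u) : Set (AddMonoidAlgebra k (Fin n → Polynomial ℤ))) =
      ↑(Submodule.span k {a : AddMonoidAlgebra k (Fin n → Polynomial ℤ) |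
          ∃ s ∈ genSemimodule u, a = AddMonoidAlgebra.single s 1}) ∧
    Nonempty ((AddMonoidAlgebra k (Fin m → Polynomial ℕ) ⧸ RingHom.ker (thetaU k u)) ≃ₐ[k]
      AddMonoidAlgebra k (genSemimodule u)) := by
  rw [genSemimodule_eq_mrange]
  exact ⟨range_mapDomain_eq_span_single (expMap u),
    ⟨quotientKerMapDomainAlgHomEquiv (expMap u)⟩⟩

/-- Core of Theorem 3.5: the range of `θ_U` is the `k`-linear span of the monomials `T^u`
for `u` in the affine `ℕ[x]`-semimodule `S` generated by `U`; consequently the difference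
coordinate ring of the toric difference variety `X_U` is the semimodule algebra `k[S]`. -/
theorem range_thetaU_eq_span_semimodule_monomials
    (k : Type*) [Field k] [CharZero k] {m n : ℕ}
    (u : Fin m → Fin n → Polynomial ℤ) :
    (Set.range (thetaU k u) : Set (AddMonoidAlgebra k (Fin n → Polynomial ℤ))) =
      ↑(Submodule.span k {a : AddMonoidAlgebra k (Fin n → Polynomial ℤ) |
          ∃ s ∈ genSemimodule u, a = AddMonoidAlgebra.single s 1}) ∧
    Nonempty ((AddMonoidAlgebra k (Fin m → Polynomial ℕ) ⧸ RingHom.ker (thetaU k u)) ≃ₐ[k]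
      AddMonoidAlgebra k (genSemimodule u)) :=
  range_thetaU_eq_span_semimodule_monomials_general k u
end

section
/- Let L ⊆ ℤ[x]^m be a toric ℤ[x]-lattice, i.e., for every nonzero g ∈ ℤ[x] and u ∈ ℤ[x]^m, g•u ∈ L implies u ∈ L. Then L equals the double orthogonal complement: (L^C)^C = L. (Final part of Lemma 4.3.) -/
open Polynomial

/-- The orthogonal complement of a `ℤ[x]`-lattice `L ⊆ ℤ[x]^m`. -/
noncomputable def orthComp {m : ℕ} (L : Submodule (Polynomial ℤ) (Fin m → Polynomial ℤ)) :
    Submodule (Polynomial ℤ) (Fin m → Polynomial ℤ) where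
  carrier := {f | ∀ g ∈ L, ∑ i, f i * g i = 0}
  zero_mem' := by intro g hg; simp
  add_mem' := by
    intro a b ha hb g hg
    simp only [Pi.add_apply, add_mul, Finset.sum_add_distrib, ha g hg, hb g hg, add_zero]
  smul_mem' := by
    intro c a ha g hg
    simp only [Pi.smul_apply, smul_eq_mul, mul_assoc, ← Finset.mul_sum, ha g hg, mul_zero]

/-!
Let `K` be the fraction field of `ℤ[x]`. Orthogonal complements commute with passing from a
submodule of `ℤ[x]^m` to its `K`-span, since denominators can be cleared. Over `K` the dot product
is nondegenerate, so the double orthogonal complement of the span of `L` is that span again.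
Hence every `f ∈ (L^C)^C` has a nonzero multiple in `L`, and `f ∈ L` because `L` is saturated.
-/

open Submodule nonZeroDivisors
open LinearMap (BilinForm)

theorem Submodule.comap_localized₀_of_saturated {R M M' : Type*} [CommRing R]
    [AddCommGroup M] [Module R M] [AddCommGroup M'] [Module R M']
    (S : Submonoid R) (f : M →ₗ[R] M') [IsLocalizedModule S f] {N : Submodule R M}
    (hN : ∀ s ∈ S, ∀ x : M, s • x ∈ N → x ∈ N) :
    (N.localized₀ S f).comap f = N := by
  refine le_antisymm (fun x ⟨y, hy, s, hxy⟩ ↦ ?_)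
    (map_le_iff_le_comap.mp (map_le_localized₀ S f N))
  rw [IsLocalizedModule.mk'_eq_iff, ← LinearMap.map_smul_of_tower] at hxy
  obtain ⟨t, hst⟩ := IsLocalizedModule.exists_of_eq (S := S) hxy
  refine hN (t * s) (t * s).2 x ?_
  rw [mul_smul, ← Submonoid.smul_def, ← Submonoid.smul_def, ← hst]
  exact N.smul_of_tower_mem t hy

section FractionField

variable {R K M M' : Type*} [CommRing R] [Field K] [Algebra R K] [IsFractionRing R K]
  [AddCommGroup M] [Module R M] [AddCommGroup M'] [Module R M'] [Module K M']
  [IsScalarTower R K M'] (f : M →ₗ[R] M') [IsLocalizedModule R⁰ f]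
  {B : BilinForm R M} {B' : BilinForm K M'}

theorem Submodule.localized'_orthogonal
    (hB : ∀ x y, B' (f x) (f y) = algebraMap R K (B x y)) (N : Submodule R M) :
    (B.orthogonal N).localized' K R⁰ f = B'.orthogonal (N.localized' K R⁰ f) := by
  refine le_antisymm ?_ fun v hv ↦ ?_
  · rw [localized'_eq_span, span_le]
    rintro _ ⟨w, hw, rfl⟩
    have hker : N.localized' K R⁰ f ≤ LinearMap.ker (B'.flip (f w)) := by
      rw [localized'_eq_span, span_le]
      rintro _ ⟨m, hm, rfl⟩
      simp [hB, hw m hm]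
    exact fun n hn ↦ hker hn
  · obtain ⟨⟨w, s⟩, hws⟩ := IsLocalizedModule.surj R⁰ f v
    refine ⟨w, fun m hm ↦ ?_, s, IsLocalizedModule.mk'_eq_iff.mpr hws.symm⟩
    apply IsFractionRing.injective R K
    have hfm : f m ∈ N.localized' K R⁰ f := ⟨m, hm, 1, by simp⟩
    rw [← hB, ← hws, map_zero, Submonoid.smul_def, ← algebraMap_smul K, map_smul, hv _ hfm,
      smul_zero]

theorem LinearMap.BilinForm.orthogonal_orthogonal_of_saturated [FiniteDimensional K M']
    (hB : ∀ x y, B' (f x) (f y) = algebraMap R K (B x y)) (hB' : B'.Nondegenerate)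
    (hB'refl : B'.IsRefl) (hBrefl : B.IsRefl) {N : Submodule R M}
    (hN : ∀ s ∈ R⁰, ∀ x : M, s • x ∈ N → x ∈ N) :
    B.orthogonal (B.orthogonal N) = N := by
  refine le_antisymm ?_ (B.le_orthogonal_orthogonal hBrefl)
  calc B.orthogonal (B.orthogonal N)
      ≤ ((B.orthogonal (B.orthogonal N)).localized₀ R⁰ f).comap f :=
        map_le_iff_le_comap.mp (map_le_localized₀ _ _ _)
    _ = (N.localized₀ R⁰ f).comap f := by
        rw [← restrictScalars_localized' K, localized'_orthogonal f hB,
          localized'_orthogonal f hB, B'.orthogonal_orthogonal hB' hB'refl,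
          restrictScalars_localized']
    _ = N := comap_localized₀_of_saturated R⁰ f hN

end FractionField

section DotProduct

variable {ι R : Type*} [Fintype ι] [CommRing R]

theorem dotProductBilin_isSymm : (dotProductBilin R R : BilinForm R (ι → R)).IsSymm :=
  LinearMap.isSymm_def.mpr fun x y ↦ by simp [dotProduct_comm]

theorem dotProductBilin_nondegenerate :
    (dotProductBilin R R : BilinForm R (ι → R)).Nondegenerate := by
  classical
  refine dotProductBilin_isSymm.isRefl.nondegenerate_iff_separatingLeft.mpr fun x hx ↦ ?_
  ext i
  simpa using hx (Pi.single i 1)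

end DotProduct

theorem orthComp_eq_orthogonal {m : ℕ} (L : Submodule ℤ[X] (Fin m → ℤ[X])) :
    orthComp L = LinearMap.BilinForm.orthogonal (dotProductBilin ℤ[X] ℤ[X]) L := by
  ext f
  exact forall₂_congr fun g _ ↦ by rw [dotProductBilin_apply_apply, dotProduct_comm]; rfl

/-- Final part of Lemma 4.3: if `L ⊆ ℤ[x]^m` is a toric (`ℤ[x]`-saturated) lattice,
then `(L^C)^C = L`. -/
theorem orthComp_orthComp_eq_self_of_toric
    {m : ℕ} (L : Submodule (Polynomial ℤ) (Fin m → Polynomial ℤ))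
    (htoric : ∀ g : Polynomial ℤ, g ≠ 0 → ∀ w : Fin m → Polynomial ℤ, g • w ∈ L → w ∈ L) :
    orthComp (orthComp L) = L := by
  let K := FractionRing ℤ[X]
  let toFrac : (Fin m → ℤ[X]) →ₗ[ℤ[X]] (Fin m → K) :=
    .pi fun i ↦ Algebra.linearMap ℤ[X] K ∘ₗ .proj i
  have hdot : ∀ x y, dotProductBilin K K (toFrac x) (toFrac y) =
      algebraMap ℤ[X] K (dotProductBilin ℤ[X] ℤ[X] x y) :=
    fun x y ↦ (RingHom.map_dotProduct (algebraMap ℤ[X] K) x y).symm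
  have hsat : ∀ s ∈ ℤ[X]⁰, ∀ w, s • w ∈ L → w ∈ L :=
    fun s hs ↦ htoric s (nonZeroDivisors.ne_zero hs)
  rw [orthComp_eq_orthogonal, orthComp_eq_orthogonal]
  exact LinearMap.BilinForm.orthogonal_orthogonal_of_saturated toFrac hdot
    dotProductBilin_nondegenerate dotProductBilin_isSymm.isRefl dotProductBilin_isSymm.isRefl hsat
end

section
/- Let k be a field of characteristic zero and u_1,…,u_m ∈ ℤ[x]^n. Let R = AddMonoidAlgebra k (ℕ[x]^m × ℤ[x]^n) (the Laurent difference polynomial ring k{y_1,…,y_m, t_1^{±1},…,t_n^{±1}}), let ι : AddMonoidAlgebra k (ℕ[x]^m) → R be the k-algebra inclusion induced by w ↦ (w, 0), and let J ⊆ R be the ideal generated by the elements single(x^k·e_i, 0) 1 − single(0, x^k·u_i) 1 for 1 ≤ i ≤ m and k ∈ ℕ (the difference ideal generated by y_1 − T^{u_1}, …, y_m − T^{u_m}). Then Ideal.comap ι J = ker θ_U, where θ_U is the monomial substitution homomorphism with θ_U(Y^w) = T^{∑_i w_i·u_i}. (Equation (5): I_U = I_{U,T^±} ∩ k{Y}.)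 -/
/-!
Let `M = ℕ[x]^m`, `N = ℤ[x]^n`, write `Y^a` for `single (a, 0) 1` and `T^b` for `single (0, b) 1`
in `k[M × N]`, and let `φ : M →+ N` be the exponent map `w ↦ ∑ i, w i • u i`. Substituting `T^{φ a}` for `Y^a` is a ring
map `k[M × N] → k[N]` that kills `J` and restricts to `θ_U` on `k[M]`, so the contraction of `J`
lies in `ker θ_U`. Conversely, the identity
`Y^{a+b} - T^{φ(a+b)} = Y^a (Y^b - T^{φ b}) + (Y^a - T^{φ a}) T^{φ b}`
shows that `Y^a - T^{φ a} ∈ J` for every `a` in the additive monoid generated by the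
`x^j e_i`, which is all of `ℕ[x]^m`. Hence `ι f ≡ θ_U f` modulo `J` (with `k[N] ⊆ k[M × N]`),
and `ι f ∈ J` whenever `θ_U f = 0`.
-/

open Polynomial AddMonoidAlgebra

/-- The inclusion `k{Y} → k{Y, T^±}` induced by `w ↦ (w, 0)`. -/
noncomputable def iotaYT (k : Type*) [CommRing k] {m n : ℕ} :
    AddMonoidAlgebra k (Fin m → Polynomial ℕ) →ₐ[k]
      AddMonoidAlgebra k ((Fin m → Polynomial ℕ) × (Fin n → Polynomial ℤ)) :=
  AddMonoidAlgebra.mapDomainAlgHom k k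
    (AddMonoidHom.inl (Fin m → Polynomial ℕ) (Fin n → Polynomial ℤ))

namespace AddMonoidAlgebra

variable {k M N : Type*} [CommRing k] [AddCommMonoid M] [AddCommMonoid N]

variable (k) in
noncomputable def graphBinomial (φ : M →+ N) (a : M) : AddMonoidAlgebra k (M × N) :=
  single (a, 0) 1 - single (0, φ a) 1

variable (k) in
noncomputable def graphIdeal (φ : M →+ N) (s : Set M) : Ideal (AddMonoidAlgebra k (M × N)) :=
  Ideal.span (graphBinomial k φ '' s)

lemma graphBinomial_add (φ : M →+ N) (a b : M) :
    graphBinomial k φ (a + b) =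
      single (a, 0) 1 * graphBinomial k φ b + graphBinomial k φ a * single (0, φ b) 1 := by
  simp only [graphBinomial, mul_sub, sub_mul, single_mul_single, mul_one, Prod.mk_add_mk,
    add_zero, zero_add, map_add]
  abel

lemma graphBinomial_mem_graphIdeal {φ : M →+ N} {s : Set M} {a : M}
    (ha : a ∈ AddSubmonoid.closure s) : graphBinomial k φ a ∈ graphIdeal k φ s := by
  induction ha using AddSubmonoid.closure_induction with
  | mem a ha => exact Ideal.subset_span ⟨a, ha, rfl⟩
  | zero => simp [graphBinomial]
  | add a b _ _ ha hb =>
    rw [graphBinomial_add]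
    exact add_mem (Ideal.mul_mem_left _ _ hb) (Ideal.mul_mem_right _ _ ha)

lemma graphIdeal_le_ker (φ : M →+ N) (s : Set M) :
    graphIdeal k φ s ≤ RingHom.ker (mapDomainAlgHom k k (φ.coprod (AddMonoidHom.id N))) := by
  rw [graphIdeal, Ideal.span_le]
  rintro _ ⟨a, -, rfl⟩
  rw [SetLike.mem_coe, RingHom.mem_ker, graphBinomial, map_sub]
  simp

lemma mapDomain_inl_sub_mapDomain_inr_mem_graphIdeal {φ : M →+ N} {s : Set M}
    (hs : AddSubmonoid.closure s = ⊤) (f : AddMonoidAlgebra k M) :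
    mapDomainAlgHom k k (AddMonoidHom.inl M N) f -
        mapDomainAlgHom k k ((AddMonoidHom.inr M N).comp φ) f ∈ graphIdeal k φ s := by
  induction f using induction_linear with
  | zero => simp
  | add f g hf hg =>
    rw [map_add, map_add, add_sub_add_comm]
    exact add_mem hf hg
  | single a c =>
    have hbin := graphBinomial_mem_graphIdeal (k := k) (φ := φ) (hs ▸ AddSubmonoid.mem_top a)
    convert Submodule.smul_of_tower_mem _ c hbin using 1
    simp [graphBinomial, smul_sub, smul_single]

theorem comap_inl_graphIdeal {φ : M →+ N} {s : Set M} (hs : AddSubmonoid.closure s = ⊤) :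
    (graphIdeal k φ s).comap (mapDomainAlgHom k k (AddMonoidHom.inl M N)) =
      RingHom.ker (mapDomainAlgHom k k φ) := by
  apply le_antisymm
  · intro f hf
    have hker := graphIdeal_le_ker φ s hf
    rwa [RingHom.mem_ker, ← AlgHom.comp_apply, ← mapDomainAlgHom_comp,
      AddMonoidHom.coprod_comp_inl] at hker
  · intro f hf
    rw [RingHom.mem_ker] at hf
    have hdiff := mapDomain_inl_sub_mapDomain_inr_mem_graphIdeal (k := k) (φ := φ) hs f
    rwa [mapDomainAlgHom_comp, AlgHom.comp_apply, hf, map_zero, sub_zero] at hdiff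

end AddMonoidAlgebra

lemma expMap_pi_single {m n : ℕ} (u : Fin m → Fin n → Polynomial ℤ) (i : Fin m) (j : ℕ) :
    expMap u (Pi.single i (X ^ j) : Fin m → ℕ[X]) = (X : Polynomial ℤ) ^ j • u i := by
  simp [expMap, Pi.single_apply, apply_ite (Polynomial.map _), ite_smul]

lemma Polynomial.addSubmonoid_closure_range_X_pow :
    AddSubmonoid.closure (Set.range fun j : ℕ => (X : ℕ[X]) ^ j) = ⊤ := by
  rw [eq_top_iff, ← Polynomial.addSubmonoid_closure_setOfPred_eq_monomial,
    AddSubmonoid.closure_le]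
  rintro _ ⟨j, a, rfl⟩
  rw [← Polynomial.smul_X_eq_monomial]
  exact AddSubmonoid.nsmul_mem _ (AddSubmonoid.subset_closure (Set.mem_range_self j)) a

lemma AddSubmonoid.closure_range_pi_single_eq_top {ι κ A : Type*} [Fintype ι] [DecidableEq ι]
    [AddCommMonoid A] {g : κ → A} (hg : AddSubmonoid.closure (Set.range g) = ⊤) :
    AddSubmonoid.closure (Set.range fun p : ι × κ => (Pi.single p.1 (g p.2) : ι → A)) = ⊤ := by
  rw [eq_top_iff]
  rintro w -
  rw [← Finset.univ_sum_single w]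
  refine _root_.sum_mem fun i _ => ?_
  have hi : Pi.single i (w i) ∈
      (AddSubmonoid.closure (Set.range g)).map (AddMonoidHom.single (fun _ : ι => A) i) := by
    rw [hg]
    exact ⟨w i, trivial, rfl⟩
  rw [AddMonoidHom.map_mclosure, ← Set.range_comp] at hi
  exact AddSubmonoid.closure_mono (by rintro _ ⟨j, rfl⟩; exact ⟨(i, j), rfl⟩) hi

theorem comap_diff_ideal_eq_kernel_thetaU_general
    (k : Type*) [Field k] {m n : ℕ}
    (u : Fin m → Fin n → Polynomial ℤ)
    (J : Ideal (AddMonoidAlgebra k ((Fin m → Polynomial ℕ) × (Fin n → Polynomial ℤ))))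
    (hJ : J = Ideal.span {a | ∃ (i : Fin m) (j : ℕ), a =
        AddMonoidAlgebra.single ((Pi.single i (Polynomial.X ^ j) : Fin m → Polynomial ℕ),
            (0 : Fin n → Polynomial ℤ)) (1 : k) -
          AddMonoidAlgebra.single ((0 : Fin m → Polynomial ℕ),
            ((Polynomial.X : Polynomial ℤ) ^ j) • u i) (1 : k)}) :
    Ideal.comap (iotaYT k) J = RingHom.ker (thetaU k u) := by
  have hJ' : J = graphIdeal k (expMap u)
      (Set.range fun p : Fin m × ℕ => (Pi.single p.1 (X ^ p.2) : Fin m → ℕ[X])) := by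
    rw [hJ, graphIdeal, ← Set.range_comp]
    congr 1
    ext a
    simp [graphBinomial, expMap_pi_single, eq_comm]
  rw [hJ']
  exact comap_inl_graphIdeal
    (AddSubmonoid.closure_range_pi_single_eq_top Polynomial.addSubmonoid_closure_range_X_pow)

/-- Equation (5): `I_U = I_{U,T^±} ∩ k{Y}`, i.e. the contraction along `ι` of the
difference ideal generated by `y_1 − T^{u_1}, …, y_m − T^{u_m}` in the Laurent difference
polynomial ring `k{y_1,…,y_m, t_1^{±1},…,t_n^{±1}}` equals `ker θ_U`. -/
theorem comap_diff_ideal_eq_kernel_thetaU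
    (k : Type*) [Field k] [CharZero k] {m n : ℕ}
    (u : Fin m → Fin n → Polynomial ℤ)
    (J : Ideal (AddMonoidAlgebra k ((Fin m → Polynomial ℕ) × (Fin n → Polynomial ℤ))))
    (hJ : J = Ideal.span {a | ∃ (i : Fin m) (j : ℕ), a =
        AddMonoidAlgebra.single ((Pi.single i (Polynomial.X ^ j) : Fin m → Polynomial ℕ),
            (0 : Fin n → Polynomial ℤ)) (1 : k) -
          AddMonoidAlgebra.single ((0 : Fin m → Polynomial ℕ),
            ((Polynomial.X : Polynomial ℤ) ^ j) • u i) (1 : k)}) :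
    Ideal.comap (iotaYT k) J = RingHom.ker (thetaU k u) :=
  comap_diff_ideal_eq_kernel_thetaU_general k u J hJ
end

section
/- Let S ⊆ ℤ[x]^n be an affine ℕ[x]-semimodule, let k be a field of characteristic zero equipped with a ring endomorphism σ_k, and let k[S] = AddMonoidAlgebra k S with the ring endomorphism σ determined by σ(c·T^u) = σ_k(c)·T^{x·u}. Let F be a subset of S. Then the k-linear span of the set of monomials {T^u : u ∈ S \ F} is a σ-prime ideal of k[S] if and only if F is a face of S. (Lemma 6.8.) -/
open Polynomial AddMonoidAlgebra

/-- `S ⊆ ℤ[x]^n` is an `ℕ[x]`-semimodule: it contains `0`, is closed under addition, and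
closed under multiplication by elements of `ℕ[x]` (acting via the inclusion `ℕ[x] → ℤ[x]`). -/
def IsNxSemimodule {n : ℕ} (S : Set (Fin n → Polynomial ℤ)) : Prop :=
  0 ∈ S ∧ (∀ u ∈ S, ∀ v ∈ S, u + v ∈ S) ∧
    ∀ g : Polynomial ℕ, ∀ u ∈ S, (g.map (Nat.castRingHom ℤ)) • u ∈ S

/-- `S` is an affine `ℕ[x]`-semimodule: it is generated by finitely many elements. -/
def IsAffineNxSemimodule {n : ℕ} (S : Set (Fin n → Polynomial ℤ)) : Prop :=
  ∃ (m : ℕ) (u : Fin m → Fin n → Polynomial ℤ),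
    S = {x | ∃ g : Fin m → Polynomial ℕ, x = ∑ i, ((g i).map (Nat.castRingHom ℤ)) • u i}

/-- `F` is a face of the `ℕ[x]`-semimodule `S`: it is an `ℕ[x]`-subsemimodule of `S` such
that (1) `u + v ∈ F` implies `u, v ∈ F` for `u, v ∈ S`, and (2) `x·u ∈ F` implies `u ∈ F`
for `u ∈ S`. -/
def IsFace {n : ℕ} (S F : Set (Fin n → Polynomial ℤ)) : Prop :=
  F ⊆ S ∧ IsNxSemimodule F ∧
    (∀ u ∈ S, ∀ v ∈ S, u + v ∈ F → u ∈ F ∧ v ∈ F) ∧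
    (∀ u ∈ S, (Polynomial.X : Polynomial ℤ) • u ∈ F → u ∈ F)

/-!
If `F` is a face, `T^u ↦ [u ∈ F] T^u` is multiplicative, so it extends to a ring endomorphism of
`k[S]` whose kernel is the span of the monomials outside `F`. Since `S ⊆ ℤ[x]^n` has unique sums,
`k[S]` is a domain and this kernel is prime. Conversely, testing primality on
`T^u T^v = T^(u+v)` shows that `F` is a face of the monoid `S`. Finally `σ` sends `c T^u` to
`σ_k(c) T^(x u)` with `u ↦ x u` and `σ_k` injective, so `σ a` is supported on `x • supp a`;
hence `σ(I) ⊆ I` and `σ⁻¹(I) ⊆ I` together say exactly that `x u ∈ F ↔ u ∈ F`.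
-/

structure IsAddFace {M : Type*} [AddZeroClass M] (F : Set M) : Prop where
  zero_mem : 0 ∈ F
  add_mem_iff (u v : M) : u + v ∈ F ↔ u ∈ F ∧ v ∈ F

namespace AddMonoidAlgebra

lemma single_one_mem_supported_iff {k M : Type*} [Semiring k] [Nontrivial k] {T : Set M}
    {w : M} : single w (1 : k) ∈ supported k k T ↔ w ∈ T := by
  simp [mem_supported]

section Face

variable (k : Type*) {M : Type*} [CommSemiring k] [AddCommMonoid M] {F : Set M}

noncomputable def faceIndicator (hF : IsAddFace F) : Multiplicative M →* k[M] where
  toFun u := F.indicator (fun w => single w 1) u.toAdd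
  map_one' := by simp [hF.zero_mem, one_def]
  map_mul' u v := by
    by_cases hu : u.toAdd ∈ F <;> by_cases hv : v.toAdd ∈ F <;>
      simp [hF.add_mem_iff, hu, hv, single_mul_single]

noncomputable def faceProjection (hF : IsAddFace F) : k[M] →ₐ[k] k[M] :=
  lift k k[M] M (faceIndicator k hF)

variable {k}

lemma coeff_faceProjection (hF : IsAddFace F) (a : k[M]) (w : M) :
    (faceProjection k hF a).coeff w = F.indicator a.coeff w := by
  induction a using induction_linear with
  | zero => simp
  | add a b ha hb => simp [ha, hb, Set.indicator_add']
  | single u c =>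
    rcases eq_or_ne w u with rfl | hwu
    · by_cases hw : w ∈ F <;> simp [faceProjection, faceIndicator, hw]
    · rw [coeff_single, Set.indicator_apply_eq_zero.2 fun _ => Finsupp.single_eq_of_ne hwu]
      by_cases hu : u ∈ F <;> simp [faceProjection, faceIndicator, hu, Finsupp.single_eq_of_ne hwu]

lemma coe_ker_faceProjection (hF : IsAddFace F) :
    (RingHom.ker (faceProjection k hF) : Set k[M]) = supported k k Fᶜ := by
  ext a
  simp [← coeff_eq_zero, coeff_faceProjection, mem_supported', Finsupp.ext_iff,
    Set.indicator_apply_eq_zero]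

lemma exists_isPrime_of_isAddFace [IsDomain k[M]] (hF : IsAddFace F) :
    ∃ I : Ideal k[M], (I : Set k[M]) = supported k k Fᶜ ∧ I.IsPrime :=
  ⟨_, coe_ker_faceProjection hF, RingHom.ker_isPrime _⟩

lemma isAddFace_of_isPrime [Nontrivial k] {I : Ideal k[M]}
    (hI : (I : Set k[M]) = supported k k Fᶜ) (hP : I.IsPrime) : IsAddFace F := by
  have single_mem_iff (w : M) : single w (1 : k) ∈ I ↔ w ∉ F := by
    rw [← SetLike.mem_coe, hI, SetLike.mem_coe, single_one_mem_supported_iff, Set.mem_compl_iff]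
  refine ⟨?_, fun u v => ?_⟩
  · by_contra h
    exact hP.ne_top ((Ideal.eq_top_iff_one I).2 ((single_mem_iff 0).2 h))
  · rw [← not_iff_not, not_and_or, ← single_mem_iff, ← single_mem_iff, ← single_mem_iff,
      ← hP.mul_mem_iff_mem_or_mem, single_mul_single, one_mul]

end Face

section Twist

variable {k M G : Type*} [Semiring k] [FunLike G k[M] k[M]] [AddMonoidHomClass G k[M] k[M]]
  {σk : k →+* k} {φ : M → M} {σ : G}

lemma eq_mapDomain_map (hσ : ∀ w c, σ (single w c) = single (φ w) (σk c)) (a : k[M]) :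
    σ a = mapDomain φ (map (σk : k →+ k) a) := by
  induction a using induction_linear with
  | zero => simp
  | add a b ha hb => simp [ha, hb, AddMonoidAlgebra.map_add, mapDomain_add]
  | single w c => simp [hσ]

lemma map_mem_supported_iff (hφ : Function.Injective φ) (hσk : Function.Injective σk)
    (hσ : ∀ w c, σ (single w c) = single (φ w) (σk c)) {T : Set M} {a : k[M]} :
    σ a ∈ supported k k T ↔ a ∈ supported k k (φ ⁻¹' T) := by
  classical
  rw [eq_mapDomain_map hσ, mem_supported, mem_supported, coeff_mapDomain,
    Finsupp.mapDomain_support_of_injective hφ, coeff_map,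
    Finsupp.support_mapRange_of_injective (e := ⇑(σk : k →+ k)) _ _ hσk, Finset.coe_image,
    Set.image_subset_iff]

lemma forall_map_mem_supported_iff [Nontrivial k] (hφ : Function.Injective φ)
    (hσk : Function.Injective σk) (hσ : ∀ w c, σ (single w c) = single (φ w) (σk c))
    {T : Set M} :
    ((∀ a ∈ supported k k T, σ a ∈ supported k k T) ∧
      ∀ a, σ a ∈ supported k k T → a ∈ supported k k T) ↔ φ ⁻¹' T = T := by
  simp only [map_mem_supported_iff hφ hσk hσ]
  refine ⟨fun ⟨h₁, h₂⟩ => Set.ext fun w => ⟨fun h => ?_, fun h => ?_⟩, fun h => by simp [h]⟩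
  · exact single_one_mem_supported_iff.1 (h₂ _ (single_one_mem_supported_iff.2 h))
  · exact single_one_mem_supported_iff.1 (h₁ _ (single_one_mem_supported_iff.2 h))

end Twist

end AddMonoidAlgebra

instance Polynomial.instUniqueSums {R : Type*} [Semiring R] [UniqueSums R] : UniqueSums R[X] :=
  ((toFinsuppIso R).toAddEquiv.trans coeffAddEquiv).uniqueSums_iff.2 inferInstance

instance AddSubmonoid.instUniqueSums {M : Type*} [AddMonoid M] [UniqueSums M]
    (S : AddSubmonoid M) : UniqueSums S :=
  .of_injective_addHom S.subtype.toAddHom Subtype.coe_injective inferInstance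

lemma AddSubmonoid.natPolynomial_smul_mem_of_X_smul_mem {M : Type*} [AddCommMonoid M]
    [Module ℤ[X] M] (A : AddSubmonoid M) (hX : ∀ u ∈ A, (X : ℤ[X]) • u ∈ A) (g : ℕ[X]) {u : M}
    (hu : u ∈ A) : g.map (Nat.castRingHom ℤ) • u ∈ A := by
  have X_pow_smul_mem (i : ℕ) : (X : ℤ[X]) ^ i • u ∈ A := by
    induction i with
    | zero => simpa using hu
    | succ i ih => simpa [pow_succ', mul_smul] using hX _ ih
  induction g using Polynomial.induction_on' with
  | add p q hp hq => simpa [Polynomial.map_add, add_smul] using A.add_mem hp hq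
  | monomial i a =>
    rw [Polynomial.map_monomial, ← C_mul_X_pow_eq_monomial, mul_smul, eq_natCast, C_eq_natCast,
      Nat.cast_smul_eq_nsmul]
    exact A.nsmul_mem (X_pow_smul_mem i) a

lemma isFace_iff {n : ℕ} {S : AddSubmonoid (Fin n → ℤ[X])} {F : Set (Fin n → ℤ[X])}
    (hF : F ⊆ S) :
    IsFace S F ↔ IsAddFace ((↑) ⁻¹' F : Set S) ∧ ∀ u ∈ S, (X : ℤ[X]) • u ∈ F ↔ u ∈ F := by
  constructor
  · rintro ⟨-, ⟨h0, hadd, hsmul⟩, hsplit, hXrev⟩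
    refine ⟨⟨h0, fun u v => ⟨hsplit u u.2 v v.2, fun h => hadd u h.1 v h.2⟩⟩,
      fun u hu => ⟨hXrev u hu, fun h => by simpa using hsmul X u h⟩⟩
  · rintro ⟨hface, hX⟩
    let A : AddSubmonoid (Fin n → ℤ[X]) :=
      { carrier := F
        zero_mem' := hface.zero_mem
        add_mem' := fun {u v} hu hv => (hface.add_mem_iff ⟨u, hF hu⟩ ⟨v, hF hv⟩).2 ⟨hu, hv⟩ }
    refine ⟨hF, ⟨A.zero_mem, fun u hu v hv => A.add_mem hu hv,
      fun g u hu => A.natPolynomial_smul_mem_of_X_smul_mem (fun u hu => (hX u (hF hu)).2 hu) g hu⟩,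
      fun u hu v hv => (hface.add_mem_iff ⟨u, hu⟩ ⟨v, hv⟩).1, fun u hu => (hX u hu).1⟩

/-- Lemma 6.8: for an affine `ℕ[x]`-semimodule `S` and a subset `F ⊆ S`, the `k`-linear
span of the monomials `T^u`, `u ∈ S \ F`, is a `σ`-prime ideal of `k[S]` if and only if
`F` is a face of `S`. -/
theorem span_monomials_sigmaPrime_iff_face
    (k : Type*) [Field k] (σk : k →+* k) {n : ℕ}
    (S : AddSubmonoid (Fin n → Polynomial ℤ))
    (hS : IsNxSemimodule (S : Set (Fin n → Polynomial ℤ)))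
    (σ : AddMonoidAlgebra k S →+* AddMonoidAlgebra k S)
    (hσ : ∀ (w : S) (c : k), σ (AddMonoidAlgebra.single w c) =
      AddMonoidAlgebra.single
        ⟨(Polynomial.X : Polynomial ℤ) • (w : Fin n → Polynomial ℤ),
          by simpa using hS.2.2 Polynomial.X (w : Fin n → Polynomial ℤ) w.2⟩ (σk c))
    (F : Set (Fin n → Polynomial ℤ)) (hF : F ⊆ (S : Set (Fin n → Polynomial ℤ))) :
    (∃ I : Ideal (AddMonoidAlgebra k S),
        (I : Set (AddMonoidAlgebra k S)) =
          (Submodule.span k {a : AddMonoidAlgebra k S |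
            ∃ w : S, (w : Fin n → Polynomial ℤ) ∉ F ∧ a = AddMonoidAlgebra.single w 1} :
              Submodule k (AddMonoidAlgebra k S)) ∧
        I.IsPrime ∧ (∀ a ∈ I, σ a ∈ I) ∧ (∀ a, σ a ∈ I → a ∈ I)) ↔
      IsFace (S : Set (Fin n → Polynomial ℤ)) F := by
  set F' : Set S := (↑) ⁻¹' F
  set φ : S → S := fun w => ⟨X • (w : Fin n → ℤ[X]), by simpa using hS.2.2 X w w.2⟩
  have hspan : Submodule.span k {a : k[S] | ∃ w : S, (w : Fin n → ℤ[X]) ∉ F ∧ a = single w 1} =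
      supported k k F'ᶜ := by
    rw [supported_eq_span_single]
    congr 1
    ext a
    simp [F', eq_comm]
  have hφ : Function.Injective φ := fun u v h =>
    Subtype.ext (smul_right_injective _ X_ne_zero (congrArg Subtype.val h))
  have hX : φ ⁻¹' F'ᶜ = F'ᶜ ↔ ∀ u ∈ S, (X : ℤ[X]) • u ∈ F ↔ u ∈ F := by
    simp [φ, F', Set.ext_iff]
  rw [isFace_iff hF, hspan, ← hX, ← forall_map_mem_supported_iff hφ σk.injective hσ]
  constructor
  · rintro ⟨I, hI, hP, hσI⟩
    exact ⟨isAddFace_of_isPrime hI hP, by simpa only [← SetLike.mem_coe, hI] using hσI⟩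
  · rintro ⟨hface, hσF⟩
    obtain ⟨I, hI, hP⟩ := exists_isPrime_of_isAddFace (k := k) hface
    exact ⟨I, hI, hP, by simpa only [← SetLike.mem_coe, hI] using hσF⟩
end

section
/- Let L be a ℤ[x]-submodule of ℤ[x]^n and let L_{ℚ[x]} be the ℚ[x]-submodule of ℚ[x]^n generated by the image of L under the coefficientwise inclusion ℤ[x]^n → ℚ[x]^n. Then L is ℤ[x]-saturated (for every nonzero h ∈ ℤ[x] and g ∈ ℤ[x]^n, h•g ∈ L implies g ∈ L) if and only if both (i) L is ℤ-saturated (for every nonzero a ∈ ℤ and g ∈ ℤ[x]^n, a•g ∈ L implies g ∈ L), and (ii) L_{ℚ[x]} is ℚ[x]-saturated (for every nonzero h ∈ ℚ[x] and g ∈ ℚ[x]^n, h•g ∈ L_{ℚ[x]} implies g ∈ L_{ℚ[x]}). (Lemma 8.4.) -/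
open Polynomial

private lemma map_inj' : Function.Injective (fun p : Polynomial ℤ => p.map (Int.castRingHom ℚ)) :=
  Polynomial.map_injective _ Int.cast_injective

/-- clear denominators of a single rational polynomial -/
private lemma clear_one (q : Polynomial ℚ) :
    ∃ c : ℤ, c ≠ 0 ∧ ∃ p : Polynomial ℤ, p.map (Int.castRingHom ℚ) = c • q := by
  obtain ⟨⟨c, hc⟩, hcq⟩ :=
    IsLocalization.integerNormalization_map_to_map (M := nonZeroDivisors ℤ) (S := ℚ) q
  refine ⟨c, nonZeroDivisors.ne_zero hc, IsLocalization.integerNormalization (nonZeroDivisors ℤ) q, ?_⟩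
  rw [← hcq, algebraMap_int_eq]

/-- clear denominators of a vector of rational polynomials -/
private lemma clear_vec {n : ℕ} (g : Fin n → Polynomial ℚ) :
    ∃ e : ℤ, e ≠ 0 ∧ ∃ u : Fin n → Polynomial ℤ,
      ∀ i, (u i).map (Int.castRingHom ℚ) = e • g i := by
  choose c hc p hp using fun i => clear_one (g i)
  refine ⟨∏ i, c i, Finset.prod_ne_zero_iff.2 fun i _ => hc i,
    fun i => (∏ j ∈ Finset.univ.erase i, c j) • p i, fun i => ?_⟩
  have := Finset.prod_erase_mul Finset.univ c (Finset.mem_univ i)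
  calc ((∏ j ∈ Finset.univ.erase i, c j) • p i).map (Int.castRingHom ℚ)
      = (∏ j ∈ Finset.univ.erase i, c j) • ((p i).map (Int.castRingHom ℚ)) := by
        rw [zsmul_eq_mul, Polynomial.map_mul, Polynomial.map_intCast, ← zsmul_eq_mul]
    _ = (∏ j ∈ Finset.univ.erase i, c j) • (c i • g i) := by rw [hp]
    _ = (∏ i, c i) • g i := by rw [smul_smul, this]

/-- every element of the span has an integer multiple coming from `L` -/
private lemma key_lemma {n : ℕ} (L : Submodule (Polynomial ℤ) (Fin n → Polynomial ℤ))
    (x : Fin n → Polynomial ℚ)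
    (hx : x ∈ Submodule.span (Polynomial ℚ)
      ((fun g : Fin n → Polynomial ℤ => fun i => (g i).map (Int.castRingHom ℚ)) ''
        (L : Set (Fin n → Polynomial ℤ)))) :
    ∃ d : ℤ, d ≠ 0 ∧ ∃ w ∈ L, d • x = fun i => (w i).map (Int.castRingHom ℚ) := by
  induction hx using Submodule.span_induction with
  | mem y hy =>
      obtain ⟨v, hv, rfl⟩ := hy
      exact ⟨1, one_ne_zero, v, hv, one_smul _ _⟩
  | zero => exact ⟨1, one_ne_zero, 0, L.zero_mem, by funext i; simp⟩
  | add y z _ _ hy hz =>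
      obtain ⟨d₁, hd₁, w₁, hw₁, h₁⟩ := hy
      obtain ⟨d₂, hd₂, w₂, hw₂, h₂⟩ := hz
      refine ⟨d₁ * d₂, mul_ne_zero hd₁ hd₂,
        ((d₂ : Polynomial ℤ)) • w₁ + ((d₁ : Polynomial ℤ)) • w₂, L.add_mem (L.smul_mem _ hw₁) (L.smul_mem _ hw₂), ?_⟩
      funext i
      have e₁ := congrFun h₁ i
      have e₂ := congrFun h₂ i
      simp only [Pi.smul_apply, Pi.add_apply, zsmul_eq_mul, smul_eq_mul, Polynomial.map_add,
        Polynomial.map_mul, Polynomial.map_intCast, Polynomial.C_eq_intCast] at e₁ e₂ ⊢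
      push_cast
      linear_combination (d₂ : Polynomial ℚ) * e₁ + (d₁ : Polynomial ℚ) * e₂
  | smul q y _ hy =>
      obtain ⟨d, hd, w, hw, h⟩ := hy
      obtain ⟨c, hc, p, hp⟩ := clear_one q
      refine ⟨c * d, mul_ne_zero hc hd, p • w, L.smul_mem _ hw, ?_⟩
      funext i
      have e := congrFun h i
      simp only [Pi.smul_apply, zsmul_eq_mul, smul_eq_mul, Polynomial.map_mul,
        Polynomial.map_intCast] at e hp ⊢
      push_cast
      linear_combination (c : Polynomial ℚ) * q * e - map (Int.castRingHom ℚ) (w i) * hp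

/-- Lemma 8.4: a `ℤ[x]`-lattice `L ⊆ ℤ[x]^n` is `ℤ[x]`-saturated if and only if it is
`ℤ`-saturated and the `ℚ[x]`-module `L_{ℚ[x]}` generated by its image in `ℚ[x]^n` is
`ℚ[x]`-saturated. -/
theorem zx_saturated_iff_z_saturated_and_qx_saturated
    {n : ℕ} (L : Submodule (Polynomial ℤ) (Fin n → Polynomial ℤ))
    (LQ : Submodule (Polynomial ℚ) (Fin n → Polynomial ℚ))
    (hLQ : LQ = Submodule.span (Polynomial ℚ)
      ((fun g : Fin n → Polynomial ℤ => fun i => (g i).map (Int.castRingHom ℚ)) ''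
        (L : Set (Fin n → Polynomial ℤ)))) :
    (∀ h : Polynomial ℤ, h ≠ 0 → ∀ g : Fin n → Polynomial ℤ, h • g ∈ L → g ∈ L) ↔
      ((∀ a : ℤ, a ≠ 0 → ∀ g : Fin n → Polynomial ℤ, a • g ∈ L → g ∈ L) ∧
        (∀ h : Polynomial ℚ, h ≠ 0 → ∀ g : Fin n → Polynomial ℚ, h • g ∈ LQ → g ∈ LQ)) := by
  subst hLQ
  constructor
  · intro H
    constructor
    · -- ℤ-saturated
      intro a ha g hg
      refine H (C a) (by simpa using ha) g ?_
      have : (C a) • g = a • g := by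
        funext i
        simp [zsmul_eq_mul, Polynomial.C_eq_intCast, smul_eq_mul]
      rwa [this]
    · -- ℚ[x]-saturated
      intro h hh g hg
      obtain ⟨d, hd, w, hw, hdw⟩ := key_lemma L _ hg
      obtain ⟨c, hc, p, hp⟩ := clear_one h
      obtain ⟨e, he, u, hu⟩ := clear_vec g
      have hp0 : p ≠ 0 := by
        intro h0
        apply hh
        rw [h0] at hp
        have : ((c : Polynomial ℚ)) * h = 0 := by
          simpa [zsmul_eq_mul] using hp.symm
        rcases mul_eq_zero.1 this with hc' | hh'
        · exact absurd (by exact_mod_cast hc') hc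
        · exact hh'
      -- main identity : p • (d • u) = (c * e) • w
      have main : p • ((d : Polynomial ℤ)) • u = ((c * e : ℤ) : Polynomial ℤ) • w := by
        funext i
        apply map_inj'
        have ew := congrFun hdw i
        have hui := hu i
        have hp' := hp
        simp only [Pi.smul_apply, zsmul_eq_mul, smul_eq_mul] at ew hui hp' ⊢
        simp only [Polynomial.map_mul, Polynomial.map_intCast] at ew hui hp' ⊢
        push_cast at ew hui hp' ⊢
        linear_combination (map (Int.castRingHom ℚ) p) * ((d : Polynomial ℚ)) * hui +
          ((d : Polynomial ℚ)) * ((e : Polynomial ℚ)) * (g i) * hp' +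
          ((c : Polynomial ℚ)) * ((e : Polynomial ℚ)) * ew
      have hmem : p • ((d : Polynomial ℤ)) • u ∈ L := by
        rw [main]; exact L.smul_mem _ hw
      have hu_mem : u ∈ L := by
        have h1 : ((d : Polynomial ℤ)) • u ∈ L :=
          H p hp0 _ hmem
        exact H ((d : Polynomial ℤ)) (Int.cast_ne_zero.mpr hd) u h1
      have hφu : (fun i => (u i).map (Int.castRingHom ℚ)) ∈ Submodule.span (Polynomial ℚ)
          ((fun g : Fin n → Polynomial ℤ => fun i => (g i).map (Int.castRingHom ℚ)) ''
            (L : Set (Fin n → Polynomial ℤ))) :=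
        Submodule.subset_span ⟨u, hu_mem, rfl⟩
      have : g = (C ((e : ℚ)⁻¹)) • (fun i => (u i).map (Int.castRingHom ℚ)) := by
        funext i
        have he' : (e : ℚ) ≠ 0 := Int.cast_ne_zero.2 he
        simp only [Pi.smul_apply, smul_eq_mul, hu, zsmul_eq_mul]
        rw [← mul_assoc]
        rw [show ((e : ℤ) : Polynomial ℚ) = C ((e : ℚ)) by simp, ← Polynomial.C_mul,
          inv_mul_cancel₀ he', Polynomial.C_1, one_mul]
      rw [this]
      exact Submodule.smul_mem _ _ hφu
  · rintro ⟨HZ, HQ⟩ h hh g hg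
    have h1 : (fun i => ((h • g) i).map (Int.castRingHom ℚ)) ∈ Submodule.span (Polynomial ℚ)
        ((fun g : Fin n → Polynomial ℤ => fun i => (g i).map (Int.castRingHom ℚ)) ''
          (L : Set (Fin n → Polynomial ℤ))) :=
      Submodule.subset_span ⟨h • g, hg, rfl⟩
    have h2 : (h.map (Int.castRingHom ℚ)) • (fun i => (g i).map (Int.castRingHom ℚ))
        = (fun i => ((h • g) i).map (Int.castRingHom ℚ)) := by
      funext i
      simp [Polynomial.map_mul, smul_eq_mul]
    have hh' : h.map (Int.castRingHom ℚ) ≠ 0 := by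
      intro h0
      exact hh (map_inj' (by simpa using h0))
    have h3 : (fun i => (g i).map (Int.castRingHom ℚ)) ∈ Submodule.span (Polynomial ℚ)
        ((fun g : Fin n → Polynomial ℤ => fun i => (g i).map (Int.castRingHom ℚ)) ''
          (L : Set (Fin n → Polynomial ℤ))) :=
      HQ _ hh' _ (h2 ▸ h1)
    obtain ⟨d, hd, w, hw, hdw⟩ := key_lemma L _ h3
    have : d • g = w := by
      funext i
      apply map_inj'
      have := congrFun hdw i
      simp only [Pi.smul_apply, zsmul_eq_mul] at this ⊢
      simpa [Polynomial.map_mul, Polynomial.map_intCast] using this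
    exact HZ d hd g (this ▸ hw)
end

section
/- Let v_1,…,v_t ∈ ℚ[x]^n be linearly independent over ℚ[x] and let L ⊆ ℚ[x]^n be the ℚ[x]-submodule they generate. Then L is ℚ[x]-saturated (for every nonzero h ∈ ℚ[x] and g ∈ ℚ[x]^n, h•g ∈ L implies g ∈ L) if and only if for every irreducible polynomial p ∈ ℚ[x], the images of v_1,…,v_t in (ℚ[x]/(p))^n under coefficientwise reduction modulo p are linearly independent over the field ℚ[x]/(p). (Lemma 8.6, stated for the linearly independent column vectors c_{r_1,1},…,c_{r_t,1} of a generalized Hermite normal form, which generate the same ℚ[x]-module as all the columns.) -/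
open Polynomial

/-- Lemma 8.6: let `v_1,…,v_t ∈ ℚ[x]^n` be linearly independent over `ℚ[x]` and let `L`
be the `ℚ[x]`-submodule they generate. Then `L` is `ℚ[x]`-saturated if and only if for
every irreducible `p ∈ ℚ[x]`, the reductions of the `v_i` modulo `p` are linearly
independent over the field `ℚ[x]/(p)`. -/
theorem qx_saturated_iff_linearIndependent_mod_irreducible
    {t n : ℕ} (v : Fin t → Fin n → Polynomial ℚ)
    (hv : LinearIndependent (Polynomial ℚ) v)
    (L : Submodule (Polynomial ℚ) (Fin n → Polynomial ℚ))
    (hL : L = Submodule.span (Polynomial ℚ) (Set.range v)) :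
    (∀ h : Polynomial ℚ, h ≠ 0 → ∀ g : Fin n → Polynomial ℚ, h • g ∈ L → g ∈ L) ↔
      (∀ p : Polynomial ℚ, Irreducible p →
        LinearIndependent (Polynomial ℚ ⧸ Ideal.span {p})
          (fun i : Fin t => fun j : Fin n =>
            Ideal.Quotient.mk (Ideal.span {p}) (v i j))) := by
  subst hL
  constructor
  · intro hsat p hp
    rw [Fintype.linearIndependent_iff]
    intro c hc i
    choose c' hc' using fun i => Ideal.Quotient.mk_surjective (R := Polynomial ℚ)
      (I := Ideal.span {p}) (c i)
    have hdvd : ∀ j, p ∣ (∑ i, c' i • v i) j := by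
      intro j
      have h1 := congrFun hc j
      rw [← Ideal.mem_span_singleton, ← Ideal.Quotient.eq_zero_iff_mem]
      simp only [Finset.sum_apply, Pi.smul_apply, smul_eq_mul, map_sum, map_mul]
      simpa [hc', Finset.sum_apply, Pi.smul_apply, smul_eq_mul] using h1
    choose w hw using hdvd
    have hwL : p • w ∈ Submodule.span (Polynomial ℚ) (Set.range v) := by
      have : p • w = ∑ i, c' i • v i := by
        funext j; simp [Finset.sum_apply, hw j]
      rw [this]
      exact Submodule.sum_mem _ fun i _ =>
        Submodule.smul_mem _ _ (Submodule.subset_span ⟨i, rfl⟩)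
    obtain ⟨d, hd⟩ := (Submodule.mem_span_range_iff_exists_fun _).mp (hsat p hp.ne_zero w hwL)
    have heq : ∀ i, c' i = p * d i := by
      have : ∑ i, (c' i - p * d i) • v i = 0 := by
        have h2 : ∑ i, c' i • v i = p • w := by
          funext j; simp [Finset.sum_apply, hw j]
        simp only [sub_smul, Finset.sum_sub_distrib, h2, ← hd, mul_smul,
          ← Finset.smul_sum]
        abel
      intro i
      have := Fintype.linearIndependent_iff.mp hv _ this i
      linear_combination this
    rw [← hc' i, heq i, map_mul]
    have : Ideal.Quotient.mk (Ideal.span {p}) p = 0 := by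
      rw [Ideal.Quotient.eq_zero_iff_mem]; exact Ideal.subset_span rfl
    rw [this, zero_mul]
  · intro hli
    have key : ∀ p : Polynomial ℚ, Prime p → ∀ g, p • g ∈ Submodule.span (Polynomial ℚ) (Set.range v) → g ∈ Submodule.span (Polynomial ℚ) (Set.range v) := by
      intro p hp g hg
      obtain ⟨c, hc⟩ := (Submodule.mem_span_range_iff_exists_fun _).mp hg
      have hmod := Fintype.linearIndependent_iff.mp (hli p hp.irreducible)
      have hz : ∀ i, Ideal.Quotient.mk (Ideal.span {p}) (c i) = 0 := by
        apply hmod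
        funext j
        have h1 := congrFun hc j
        simp only [Finset.sum_apply, Pi.smul_apply, smul_eq_mul, Pi.zero_apply] at h1 ⊢
        calc ∑ x : Fin t, Ideal.Quotient.mk (Ideal.span {p}) (c x) *
              Ideal.Quotient.mk (Ideal.span {p}) (v x j)
            = Ideal.Quotient.mk (Ideal.span {p}) (∑ x : Fin t, c x * v x j) := by
              simp [map_sum]
          _ = Ideal.Quotient.mk (Ideal.span {p}) (p * g j) := by rw [h1]
          _ = 0 := by
              rw [map_mul,
                Ideal.Quotient.eq_zero_iff_mem.mpr (Ideal.mem_span_singleton_self p), zero_mul]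
      have hdvd : ∀ i, p ∣ c i := fun i => by
        rw [← Ideal.mem_span_singleton, ← Ideal.Quotient.eq_zero_iff_mem]; exact hz i
      choose d hd using hdvd
      have : g = ∑ i, d i • v i := by
        have h2 : p • g = p • ∑ i, d i • v i := by
          rw [← hc]
          rw [Finset.smul_sum]
          congr 1; funext i; rw [hd i, mul_smul]
        exact smul_right_injective _ hp.ne_zero h2
      rw [this]
      exact Submodule.sum_mem _ fun i _ =>
        Submodule.smul_mem _ _ (Submodule.subset_span ⟨i, rfl⟩)
    intro h
    induction h using UniqueFactorizationMonoid.induction_on_prime with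
    | h₁ => intro h0; exact absurd rfl h0
    | h₂ u hu => intro _ g hg
                 have h2 := Submodule.smul_mem _ ((hu.unit⁻¹ : (Polynomial ℚ)ˣ) : Polynomial ℚ) hg
                 rwa [smul_smul, IsUnit.val_inv_mul, one_smul] at h2
    | h₃ a p ha hp ih =>
        intro _ g hg
        rw [mul_smul] at hg
        exact ih ha _ (key p hp _ hg)
end

section
/- Let v_1,…,v_t ∈ ℚ[x]^n be linearly independent over ℚ[x] and let L ⊆ ℚ[x]^n be the ℚ[x]-submodule they generate. Let p ∈ ℚ[x] be an irreducible polynomial and f_1,…,f_t ∈ ℚ[x] be such that ∑_{i=1}^t f_i•v_i reduces to 0 in (ℚ[x]/(p))^n but not all f_i reduce to 0 in ℚ[x]/(p). Then there exists g ∈ ℚ[x]^n with ∑_{i=1}^t f_i•v_i = p•g and g ∉ L. (Corollary 8.7.) -/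
open Polynomial

/-- Corollary 8.7: let `v_1,…,v_t ∈ ℚ[x]^n` be linearly independent over `ℚ[x]`, spanning
`L`, let `p ∈ ℚ[x]` be irreducible and `f_1,…,f_t ∈ ℚ[x]` be such that `∑ i, f i • v i`
reduces to `0` modulo `p` while not all `f i` reduce to `0`. Then `∑ i, f i • v i = p • g`
for some `g ∉ L`. -/
theorem exists_vector_not_mem_of_nontrivial_relation_mod_irreducible
    {t n : ℕ} (v : Fin t → Fin n → Polynomial ℚ)
    (hv : LinearIndependent (Polynomial ℚ) v)
    (L : Submodule (Polynomial ℚ) (Fin n → Polynomial ℚ))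
    (hL : L = Submodule.span (Polynomial ℚ) (Set.range v))
    (p : Polynomial ℚ) (hp : Irreducible p)
    (f : Fin t → Polynomial ℚ)
    (hzero : ∀ j : Fin n, Ideal.Quotient.mk (Ideal.span {p}) ((∑ i, f i • v i) j) = 0)
    (hnontriv : ∃ i : Fin t, Ideal.Quotient.mk (Ideal.span {p}) (f i) ≠ 0) :
    ∃ g : Fin n → Polynomial ℚ, (∑ i, f i • v i) = p • g ∧ g ∉ L := by
  have hdvd : ∀ j : Fin n, p ∣ (∑ i, f i • v i) j := by
    intro j
    have := hzero j
    rwa [Ideal.Quotient.eq_zero_iff_mem, Ideal.mem_span_singleton] at this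
  choose g hg using hdvd
  refine ⟨g, ?_, ?_⟩
  · funext j
    simp [hg j, Pi.smul_apply, smul_eq_mul]
  · intro hgL
    rw [hL, Submodule.mem_span_range_iff_exists_fun] at hgL
    obtain ⟨c, hc⟩ := hgL
    have heq : ∑ i, (f i - p * c i) • v i = 0 := by
      have h1 : (∑ i, f i • v i) = p • g := by
        funext j; simp [hg j, Pi.smul_apply, smul_eq_mul]
      have h2 : p • g = ∑ i, (p * c i) • v i := by
        rw [← hc, Finset.smul_sum]
        congr 1; funext i; rw [smul_smul]
      simp only [sub_smul, Finset.sum_sub_distrib, h1, h2, sub_self]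
    have hall := Fintype.linearIndependent_iff.mp hv _ heq
    obtain ⟨i, hi⟩ := hnontriv
    have hfi : f i = p * c i := sub_eq_zero.mp (hall i)
    exact hi (by rw [Ideal.Quotient.eq_zero_iff_mem, Ideal.mem_span_singleton, hfi]; exact ⟨c i, rfl⟩)
end

section
/- Let k be a field, L an additive commutative monoid (in the paper, a ℤ[x]-lattice), and Δ : AddMonoidAlgebra k L → (AddMonoidAlgebra k L) ⊗[k] (AddMonoidAlgebra k L) the comultiplication with Δ(T^u) = T^u ⊗ T^u. Let M be a k-submodule of AddMonoidAlgebra k L such that for every a ∈ M, Δ(a) lies in the image of (AddMonoidAlgebra k L) ⊗[k] M under the canonical map TensorProduct.map id M.subtype. Then M is spanned by the monomial terms it contains: for every a = ∑_{u} α_u T^u ∈ M (a finite sum) and every u ∈ L, the term α_u T^u belongs to M. (Key step in the proofs of Theorem 5.9 and the invariant-subvariety theorem: a subspace invariant under the comodule structure is graded by L.) -/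
open TensorProduct

/-!
Apply the coordinate functional `a ↦ a.coeff u` to the left tensor factor and contract with
`TensorProduct.lid`. On `Δ a` this yields the term `a.coeff u • T^u`, since `Δ` is diagonal on
monomials; on `(AddMonoidAlgebra k L) ⊗ M` it takes values in `M`.
-/

section

variable {R V W : Type*} [CommSemiring R] [AddCommMonoid V] [Module R V]
  [AddCommMonoid W] [Module R W]

theorem lid_rTensor_comp_lTensor_subtype (f : V →ₗ[R] R) (M : Submodule R W) :
    TensorProduct.lid R W ∘ₗ f.rTensor W ∘ₗ M.subtype.lTensor V =
      M.subtype ∘ₗ TensorProduct.lid R M ∘ₗ f.rTensor M :=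
  TensorProduct.ext' fun _ _ ↦ by simp

theorem lid_rTensor_mem_of_mem_range_lTensor_subtype (f : V →ₗ[R] R) {M : Submodule R W}
    {x : V ⊗[R] W} (hx : x ∈ LinearMap.range (M.subtype.lTensor V)) :
    TensorProduct.lid R W (f.rTensor W x) ∈ M := by
  obtain ⟨y, rfl⟩ := hx
  change (TensorProduct.lid R W ∘ₗ f.rTensor W ∘ₗ M.subtype.lTensor V) y ∈ M
  rw [lid_rTensor_comp_lTensor_subtype]
  exact Submodule.coe_mem _

theorem lid_rTensor_coord_of_apply_basis {ι : Type*} (b : Module.Basis ι R V)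
    (Δ : V →ₗ[R] V ⊗[R] V) (hΔ : ∀ i, Δ (b i) = b i ⊗ₜ b i) (i : ι) (x : V) :
    TensorProduct.lid R V ((b.coord i).rTensor V (Δ x)) = b.coord i x • b i := by
  suffices h : TensorProduct.lid R V ∘ₗ (b.coord i).rTensor V ∘ₗ Δ =
      (b.coord i).smulRight (b i) from LinearMap.congr_fun h x
  refine b.ext fun j ↦ ?_
  obtain rfl | hji := eq_or_ne j i
  · simp [hΔ]
  · simp [hΔ, hji]

end

/-- Key step in Theorem 5.9: if `M` is a `k`-subspace of the monoid algebra
`AddMonoidAlgebra k L` such that `Δ(M) ⊆ (AddMonoidAlgebra k L) ⊗ M`, where `Δ` is the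
comultiplication with `Δ(T^u) = T^u ⊗ T^u`, then `M` is spanned by the monomial terms it
contains: for every `a ∈ M` and `u ∈ L`, the term `(a u) • T^u` belongs to `M`. -/
theorem comodule_submodule_is_graded
    (k : Type*) [Field k] (L : Type*) [AddCommMonoid L]
    (Δ : AddMonoidAlgebra k L →ₗ[k] (AddMonoidAlgebra k L) ⊗[k] (AddMonoidAlgebra k L))
    (hΔ : ∀ u : L, Δ (AddMonoidAlgebra.single u 1) =
      (AddMonoidAlgebra.single u 1) ⊗ₜ[k] (AddMonoidAlgebra.single u 1))
    (M : Submodule k (AddMonoidAlgebra k L))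
    (hM : ∀ a ∈ M, Δ a ∈ LinearMap.range
      (TensorProduct.map (LinearMap.id : AddMonoidAlgebra k L →ₗ[k] AddMonoidAlgebra k L)
        M.subtype)) :
    ∀ a ∈ M, ∀ u : L, (AddMonoidAlgebra.single u (a.coeff u) : AddMonoidAlgebra k L) ∈ M := by
  intro a ha u
  let b := AddMonoidAlgebra.basis L k
  have hterm : AddMonoidAlgebra.single u (a.coeff u) = b.coord u a • b u := by
    simp only [b, Module.Basis.coord_apply, AddMonoidAlgebra.basis_apply,
      AddMonoidAlgebra.smul_single, smul_eq_mul, mul_one]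
    rfl
  rw [hterm, ← lid_rTensor_coord_of_apply_basis b Δ hΔ]
  exact lid_rTensor_mem_of_mem_range_lTensor_subtype _ (hM a ha)
end

section
/- Let S = ℕ[x]({u_1,…,u_m}) ⊆ ℤ[x]^n be the affine ℕ[x]-semimodule generated by a finite set {u_1,…,u_m}, and let F be a face of S. Then F is generated as an ℕ[x]-semimodule by those generators of S which lie in F: F = ℕ[x]({u_i : u_i ∈ F}). Consequently every face of S is an affine ℕ[x]-semimodule and S has only finitely many faces. -/
open Polynomial

/-!
Write `v ∈ F` as `∑ gᵢ • uᵢ`. Every summand lies in `S`, so by the first face axiom every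
summand lies in `F`. A nonzero `g ∈ ℕ[x]` has some coefficient `≥ 1`, i.e. `g = x^k + r` with
`r ∈ ℕ[x]`; so `g • uᵢ ∈ F` gives `x^k • uᵢ ∈ F`, and the second face axiom, applied `k` times,
gives `uᵢ ∈ F`. Hence a face is determined by the set of generators it contains, and there are
at most `2^m` faces.
-/

section

variable {n : ℕ} {S F : Set (Fin n → ℤ[X])}

theorem IsNxSemimodule.sum_mem (hS : IsNxSemimodule S) {ι : Type*} {t : Finset ι}
    {f : ι → Fin n → ℤ[X]} (h : ∀ i ∈ t, f i ∈ S) : ∑ i ∈ t, f i ∈ S :=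
  AddSubmonoid.sum_mem ⟨⟨S, fun ha hb => hS.2.1 _ ha _ hb⟩, hS.1⟩ h

theorem IsNxSemimodule.X_pow_smul_mem (hS : IsNxSemimodule S) {v : Fin n → ℤ[X]} (hv : v ∈ S)
    (k : ℕ) : (X : ℤ[X]) ^ k • v ∈ S := by
  simpa using hS.2.2 (X ^ k) v hv

theorem IsFace.mem_of_sum_mem (hS : IsNxSemimodule S) (hF : IsFace S F) {ι : Type*}
    {t : Finset ι} {f : ι → Fin n → ℤ[X]} (hfS : ∀ i ∈ t, f i ∈ S) (hsum : ∑ i ∈ t, f i ∈ F) :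
    ∀ i ∈ t, f i ∈ F := by
  induction t using Finset.cons_induction with
  | empty => simp
  | cons a t ha ih =>
    rw [Finset.sum_cons] at hsum
    simp only [Finset.mem_cons, forall_eq_or_imp] at hfS ⊢
    have hrest : ∑ i ∈ t, f i ∈ S := hS.sum_mem hfS.2
    obtain ⟨hfa, hrestF⟩ := hF.2.2.1 _ hfS.1 _ hrest hsum
    exact ⟨hfa, ih hfS.2 hrestF⟩

theorem IsFace.mem_of_X_pow_smul_mem (hS : IsNxSemimodule S) (hF : IsFace S F)
    {v : Fin n → ℤ[X]} (hv : v ∈ S) (k : ℕ) (h : (X : ℤ[X]) ^ k • v ∈ F) : v ∈ F := by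
  induction k with
  | zero => simpa using h
  | succ k ih =>
    rw [pow_succ', mul_smul] at h
    exact ih (hF.2.2.2 _ (hS.X_pow_smul_mem hv k) h)

theorem IsFace.mem_of_smul_mem (hS : IsNxSemimodule S) (hF : IsFace S F) {v : Fin n → ℤ[X]}
    (hv : v ∈ S) {g : ℕ[X]} (hg : g ≠ 0) (h : g.map (Nat.castRingHom ℤ) • v ∈ F) : v ∈ F := by
  obtain ⟨c, hc⟩ := Nat.exists_eq_add_one_of_ne_zero (leadingCoeff_ne_zero.mpr hg)
  set k := g.natDegree
  have hsplit : g = X ^ k + (monomial k c + g.erase k) := by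
    conv_lhs => rw [← monomial_add_erase g k]
    rw [coeff_natDegree, hc, X_pow_eq_monomial, ← add_assoc, ← map_add, add_comm 1 c]
  rw [hsplit, Polynomial.map_add, add_smul, Polynomial.map_pow, map_X] at h
  have hXk : (X : ℤ[X]) ^ k • v ∈ F := (hF.2.2.1 _ (hS.X_pow_smul_mem hv k) _ (hS.2.2 _ v hv) h).1
  exact hF.mem_of_X_pow_smul_mem hS hv k hXk

end

section

variable {ι : Type*} [Fintype ι] {n : ℕ}

def nxSpan (u : ι → Fin n → ℤ[X]) : Set (Fin n → ℤ[X]) :=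
  {x | ∃ g : ι → ℕ[X], x = ∑ i, ((g i).map (Nat.castRingHom ℤ)) • u i}

def nxSpanOn (u : ι → Fin n → ℤ[X]) (A : Set ι) : Set (Fin n → ℤ[X]) :=
  {x | ∃ g : ι → ℕ[X], (∀ i, g i ≠ 0 → i ∈ A) ∧ x = ∑ i, ((g i).map (Nat.castRingHom ℤ)) • u i}

theorem isNxSemimodule_nxSpan (u : ι → Fin n → ℤ[X]) : IsNxSemimodule (nxSpan u) := by
  refine ⟨⟨0, by simp⟩, ?_, ?_⟩
  · rintro _ ⟨g, rfl⟩ _ ⟨h, rfl⟩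
    exact ⟨g + h, by simp only [Pi.add_apply, Polynomial.map_add, add_smul, Finset.sum_add_distrib]⟩
  · rintro p _ ⟨g, rfl⟩
    exact ⟨fun i => p * g i, by simp only [Finset.smul_sum, Polynomial.map_mul, mul_smul]⟩

theorem mem_nxSpan_self (u : ι → Fin n → ℤ[X]) (i : ι) : u i ∈ nxSpan u := by
  classical
  exact ⟨Pi.single i 1, by simp [Pi.single_apply, apply_ite]⟩

theorem nxSpanOn_subset {u : ι → Fin n → ℤ[X]} {A : Set ι} (hF : IsNxSemimodule F)
    (hA : ∀ i ∈ A, u i ∈ F) : nxSpanOn u A ⊆ F := by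
  rintro _ ⟨g, hgA, rfl⟩
  refine hF.sum_mem fun i _ => ?_
  by_cases hgi : g i = 0
  · simpa [hgi] using hF.1
  · exact hF.2.2 _ _ (hA i (hgA i hgi))

theorem IsFace.eq_nxSpanOn {u : ι → Fin n → ℤ[X]} (hF : IsFace (nxSpan u) F) :
    F = nxSpanOn u {i | u i ∈ F} := by
  have hS := isNxSemimodule_nxSpan u
  have hterm_mem (g : ι → ℕ[X]) (i : ι) : (g i).map (Nat.castRingHom ℤ) • u i ∈ nxSpan u :=
    hS.2.2 _ _ (mem_nxSpan_self u i)
  refine subset_antisymm (fun v hvF => ?_) (nxSpanOn_subset hF.2.1 fun i hi => hi)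
  obtain ⟨g, rfl⟩ := hF.1 hvF
  refine ⟨g, fun i hgi => ?_, rfl⟩
  have hgiF := hF.mem_of_sum_mem hS (fun j _ => hterm_mem g j) hvF i (Finset.mem_univ i)
  exact hF.mem_of_smul_mem hS (mem_nxSpan_self u i) hgi hgiF

theorem finite_setOf_isFace_nxSpan (u : ι → Fin n → ℤ[X]) :
    {F | IsFace (nxSpan u) F}.Finite :=
  (Set.finite_range (nxSpanOn u)).subset fun F hF => ⟨{i | u i ∈ F}, (IsFace.eq_nxSpanOn hF).symm⟩

end

/-- Every face `F` of the affine `ℕ[x]`-semimodule `S = ℕ[x]({u_1,…,u_m})` is generated by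
those generators of `S` lying in `F`; consequently every face is an affine
`ℕ[x]`-semimodule and `S` has only finitely many faces. -/
theorem face_generated_by_generators_and_finitely_many_faces
    {m n : ℕ} (u : Fin m → Fin n → Polynomial ℤ)
    (S : Set (Fin n → Polynomial ℤ))
    (hS : S = {x | ∃ g : Fin m → Polynomial ℕ,
      x = ∑ i, ((g i).map (Nat.castRingHom ℤ)) • u i})
    (F : Set (Fin n → Polynomial ℤ)) (hF : IsFace S F) :
    (F = {x | ∃ g : Fin m → Polynomial ℕ, (∀ i, g i ≠ 0 → u i ∈ F) ∧
        x = ∑ i, ((g i).map (Nat.castRingHom ℤ)) • u i}) ∧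
      {F' : Set (Fin n → Polynomial ℤ) | IsFace S F'}.Finite := by
  change S = nxSpan u at hS
  subst hS
  exact ⟨hF.eq_nxSpanOn, finite_setOf_isFace_nxSpan u⟩
end

section
/- Let k be a field of characteristic zero. Let L ⊆ ℤ[x] be the ℤ[x]-submodule of ℤ[x] generated by the two polynomials 2 and x. Let A = AddMonoidAlgebra k ℤ[x] and B = AddMonoidAlgebra k L, each equipped with the k-algebra endomorphism σ determined on monomials by σ(T^u) = T^{x·u}. Then there is no k-algebra isomorphism θ : A ≃ B satisfying θ ∘ σ_A = σ_B ∘ θ. (Example 5.6: the difference coordinate ring k{t, t^{−1}} of 𝔸* is not isomorphic as a k-σ-algebra to k{s², s^{−2}, s^x, s^{−x}}; hence the difference torus defined by U = {2, x} is not isomorphic to 𝔸*.) -/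
/-!
Over a domain, the units of the group algebra of a group with the two-unique-sums property
(such as `ℤ[x]` and its subgroups) are the monomials `c T^u`. So a `k`-algebra isomorphism
`θ : k[ℤ[x]] ≃ k[L]` sends `T^u` to `c_u T^{φ u}` for a surjective additive map
`φ : ℤ[x] → L`. Compatibility with `σ` gives `φ (x u) = x φ u`, so `φ` is `ℤ[x]`-linear and
`L = ℤ[x] φ(1)` would be a principal ideal. But `(2, x)` is not principal.
-/

open Polynomial

instance Polynomial.twoUniqueSums {R : Type*} [Semiring R] [TwoUniqueSums R] :
    TwoUniqueSums R[X] :=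
  ((toFinsuppIso R).toAddEquiv.trans AddMonoidAlgebra.coeffAddEquiv).twoUniqueSums_iff.mpr
    inferInstance

instance Submodule.twoUniqueSums {R M : Type*} [Semiring R] [AddCommMonoid M] [Module R M]
    [TwoUniqueSums M] (N : Submodule R M) : TwoUniqueSums N :=
  .of_injective_addHom N.subtype.toAddMonoidHom.toAddHom Subtype.val_injective inferInstance

namespace AddMonoidAlgebra

variable {k G : Type*}

theorem eq_of_single_eq_single [Semiring k] {a b : G} {c d : k} (hc : c ≠ 0)
    (h : (single a c : AddMonoidAlgebra k G) = single b d) : a = b :=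
  ((single_inj.mp h).resolve_right fun h' => hc h'.1).1

theorem isUnit_single_one [Semiring k] [AddGroup G] (u : G) : IsUnit (single u (1 : k)) :=
  (Group.isUnit (Multiplicative.ofAdd u)).map (of k G)

section Units

variable [Semiring k] [IsDomain k] [AddMonoid G] {f g : AddMonoidAlgebra k G}

theorem add_eq_zero_of_mul_eq_one_of_uniqueAdd (hfg : f * g = 1) {a b : G}
    (ha : a ∈ f.coeff.support) (hb : b ∈ g.coeff.support)
    (hab : UniqueAdd f.coeff.support g.coeff.support a b) : a + b = 0 := by
  classical
  have hcoeff := coeff_mul_add_of_uniqueAdd hab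
  rw [hfg, one_def, coeff_single, Finsupp.single_apply] at hcoeff
  by_contra h
  rw [if_neg (Ne.symm h)] at hcoeff
  exact mul_ne_zero (Finsupp.mem_support_iff.mp ha) (Finsupp.mem_support_iff.mp hb) hcoeff.symm

theorem card_support_mul_card_support_le_one [TwoUniqueSums G] (hfg : f * g = 1) :
    f.coeff.support.card * g.coeff.support.card ≤ 1 := by
  by_contra! hlt
  obtain ⟨p, hp, q, hq, hpq, hpu, hqu⟩ := TwoUniqueSums.uniqueAdd_of_one_lt_card hlt
  rw [Finset.mem_product] at hp hq
  have hsum : q.1 + q.2 = p.1 + p.2 :=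
    (add_eq_zero_of_mul_eq_one_of_uniqueAdd hfg hq.1 hq.2 hqu).trans
      (add_eq_zero_of_mul_eq_one_of_uniqueAdd hfg hp.1 hp.2 hpu).symm
  obtain ⟨h1, h2⟩ := hpu hq.1 hq.2 hsum
  exact hpq (Prod.ext h1.symm h2.symm)

theorem exists_single_of_isUnit [TwoUniqueSums G] (hf : IsUnit f) :
    ∃ a c, c ≠ 0 ∧ f = single a c := by
  obtain ⟨g, hfg⟩ := hf.exists_right_inv
  have support_nonempty {x : AddMonoidAlgebra k G} (hx : x ≠ 0) : x.coeff.support.Nonempty := by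
    rwa [Finsupp.support_nonempty_iff, Ne, coeff_eq_zero]
  have hf_card : f.coeff.support.card = 1 := by
    have := (support_nonempty (left_ne_zero_of_mul_eq_one hfg)).card_pos
    have := (support_nonempty (right_ne_zero_of_mul_eq_one hfg)).card_pos
    have := card_support_mul_card_support_le_one hfg
    nlinarith
  obtain ⟨a, ha, hfa⟩ := Finsupp.card_support_eq_one.mp hf_card
  exact ⟨a, f.coeff a, ha, coeff_injective hfa⟩

end Units

theorem exists_surjective_addMonoidHom_of_algEquiv [CommRing k] [IsDomain k] [AddGroup G]
    [TwoUniqueSums G] {H : Type*} [AddGroup H] [TwoUniqueSums H]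
    (θ : AddMonoidAlgebra k G ≃ₐ[k] AddMonoidAlgebra k H) :
    ∃ φ : G →+ H, Function.Surjective φ ∧
      ∀ u, ∃ c, c ≠ 0 ∧ θ (single u 1) = single (φ u) c := by
  choose φ c hc hφ using fun u : G => exists_single_of_isUnit ((isUnit_single_one u).map θ)
  have φ_add (u v : G) : φ (u + v) = φ u + φ v := by
    refine eq_of_single_eq_single (hc (u + v)) ((hφ (u + v)).symm.trans ?_) (d := c u * c v)
    rw [← one_mul (1 : k), ← single_mul_single, map_mul, hφ, hφ, single_mul_single]
  refine ⟨AddMonoidHom.mk' φ φ_add, fun v => ?_, fun u => ⟨c u, hc u, hφ u⟩⟩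
  obtain ⟨u, d, -, hu⟩ := exists_single_of_isUnit ((isUnit_single_one v).map θ.symm)
  refine ⟨u, (eq_of_single_eq_single one_ne_zero ?_ (d := d * c u)).symm⟩
  have hsingle : single u d = d • single u (1 : k) := by rw [smul_single', mul_one]
  rw [← θ.apply_symm_apply (single v 1), hu, hsingle, map_smul, hφ, smul_single']
  rfl

end AddMonoidAlgebra

theorem AddMonoidHom.map_smul_of_map_X_smul {M N : Type*} [AddCommGroup M] [Module ℤ[X] M]
    [AddCommGroup N] [Module ℤ[X] N] (f : M →+ N)
    (hf : ∀ m, f ((X : ℤ[X]) • m) = (X : ℤ[X]) • f m) (p : ℤ[X]) (m : M) :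
    f (p • m) = p • f m := by
  induction p using Polynomial.induction_on' with
  | add p q hp hq => rw [add_smul, map_add, hp, hq, add_smul]
  | monomial n a =>
    have hXpow : ∀ m, f ((X : ℤ[X]) ^ n • m) = (X : ℤ[X]) ^ n • f m := by
      induction n with
      | zero => simp
      | succ n ih => intro m; rw [pow_succ', mul_smul, mul_smul, hf, ih]
    rw [← C_mul_X_pow_eq_monomial, mul_smul, mul_smul, ← algebraMap_eq, algebraMap_smul,
      algebraMap_smul, map_zsmul, hXpow]

theorem Submodule.isPrincipal_of_surjective_of_map_X_smul {M : Type*} [AddCommGroup M]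
    [Module ℤ[X] M] (N : Submodule ℤ[X] M) (φ : ℤ[X] →+ N) (hφ : Function.Surjective φ)
    (hX : ∀ p, φ ((X : ℤ[X]) • p) = (X : ℤ[X]) • φ p) : N.IsPrincipal := by
  refine ⟨φ 1, le_antisymm (fun v hv => ?_) ((span_singleton_le_iff_mem _ _).mpr (φ 1).2)⟩
  obtain ⟨p, hp⟩ := hφ ⟨v, hv⟩
  refine mem_span_singleton.mpr ⟨p, ?_⟩
  rw [← coe_smul, ← φ.map_smul_of_map_X_smul hX, smul_eq_mul, mul_one, hp]

theorem Polynomial.not_isPrincipal_span_two_X :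
    ¬ (Submodule.span ℤ[X] {2, X} : Submodule ℤ[X] ℤ[X]).IsPrincipal := by
  rintro ⟨g, hg⟩
  have dvd_of_mem : ∀ p ∈ Submodule.span ℤ[X] {2, X}, g ∣ p := fun p hp => by
    obtain ⟨a, rfl⟩ := Submodule.mem_span_singleton.mp (hg ▸ hp)
    exact dvd_mul_left g a
  obtain ⟨h, hXgh⟩ := dvd_of_mem X (Submodule.subset_span (by simp))
  rcases irreducible_X.isUnit_or_isUnit hXgh with hg_unit | hh_unit
  · have one_mem : (1 : ℤ[X]) ∈ Submodule.span ℤ[X] {2, X} := by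
      rw [hg]
      exact Submodule.mem_span_singleton.mpr ⟨↑hg_unit.unit⁻¹, hg_unit.val_inv_mul⟩
    obtain ⟨a, b, hab⟩ := Submodule.mem_span_pair.mp one_mem
    have hcoeff := congr_arg (coeff · 0) hab
    simp only [smul_eq_mul, coeff_add, coeff_mul_ofNat, mul_coeff_zero, coeff_X_zero, mul_zero,
      add_zero, coeff_one_zero] at hcoeff
    omega
  · have hXg : X ∣ g := hh_unit.dvd_mul_right.mp (hXgh ▸ dvd_refl X)
    have := X_dvd_iff.mp (hXg.trans (dvd_of_mem 2 (Submodule.subset_span (by simp))))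
    simp at this

theorem torus_not_isomorphic_to_A_star_general
    (k : Type*) [Field k]
    (L : Submodule (Polynomial ℤ) (Polynomial ℤ))
    (hL : L = Submodule.span (Polynomial ℤ) {(2 : Polynomial ℤ), Polynomial.X})
    (σA : AddMonoidAlgebra k (Polynomial ℤ) →ₐ[k] AddMonoidAlgebra k (Polynomial ℤ))
    (hσA : ∀ (u : Polynomial ℤ) (c : k),
      σA (AddMonoidAlgebra.single u c) = AddMonoidAlgebra.single ((Polynomial.X : Polynomial ℤ) • u) c)
    (σB : AddMonoidAlgebra k L →ₐ[k] AddMonoidAlgebra k L)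
    (hσB : ∀ (u : L) (c : k),
      σB (AddMonoidAlgebra.single u c) =
        AddMonoidAlgebra.single
          (⟨(Polynomial.X : Polynomial ℤ) • (u : Polynomial ℤ), L.smul_mem Polynomial.X u.2⟩ : L) c) :
    ¬ ∃ θ : AddMonoidAlgebra k (Polynomial ℤ) ≃ₐ[k] AddMonoidAlgebra k L,
        ∀ a : AddMonoidAlgebra k (Polynomial ℤ), θ (σA a) = σB (θ a) := by
  rintro ⟨θ, hθ⟩
  obtain ⟨φ, hφ_surj, hφ⟩ := AddMonoidAlgebra.exists_surjective_addMonoidHom_of_algEquiv θ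
  have hφX (u : ℤ[X]) : φ ((X : ℤ[X]) • u) = (X : ℤ[X]) • φ u := by
    obtain ⟨c, hc, hXu⟩ := hφ ((X : ℤ[X]) • u)
    obtain ⟨c', -, hu⟩ := hφ u
    have h := hθ (AddMonoidAlgebra.single u 1)
    rw [hσA, hXu, hu, hσB] at h
    exact AddMonoidAlgebra.eq_of_single_eq_single hc h
  apply Polynomial.not_isPrincipal_span_two_X
  rw [← hL]
  exact L.isPrincipal_of_surjective_of_map_X_smul φ hφ_surj hφX

/-- Example 5.6: for `L = (2, x)_{ℤ[x]} ⊆ ℤ[x]`, there is no `k`-algebra isomorphism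
between `A = AddMonoidAlgebra k ℤ[x]` (the difference coordinate ring `k{t, t⁻¹}` of `𝔸*`)
and `B = AddMonoidAlgebra k L` (the ring `k{s², s⁻², s^x, s⁻ˣ}`) commuting with the
difference structures `σ_A`, `σ_B` determined by `T^u ↦ T^{x·u}`. -/
theorem torus_not_isomorphic_to_A_star
    (k : Type*) [Field k] [CharZero k]
    (L : Submodule (Polynomial ℤ) (Polynomial ℤ))
    (hL : L = Submodule.span (Polynomial ℤ) {(2 : Polynomial ℤ), Polynomial.X})
    (σA : AddMonoidAlgebra k (Polynomial ℤ) →ₐ[k] AddMonoidAlgebra k (Polynomial ℤ))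
    (hσA : ∀ (u : Polynomial ℤ) (c : k),
      σA (AddMonoidAlgebra.single u c) = AddMonoidAlgebra.single ((Polynomial.X : Polynomial ℤ) • u) c)
    (σB : AddMonoidAlgebra k L →ₐ[k] AddMonoidAlgebra k L)
    (hσB : ∀ (u : L) (c : k),
      σB (AddMonoidAlgebra.single u c) =
        AddMonoidAlgebra.single
          (⟨(Polynomial.X : Polynomial ℤ) • (u : Polynomial ℤ), L.smul_mem Polynomial.X u.2⟩ : L) c) :
    ¬ ∃ θ : AddMonoidAlgebra k (Polynomial ℤ) ≃ₐ[k] AddMonoidAlgebra k L,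
        ∀ a : AddMonoidAlgebra k (Polynomial ℤ), θ (σA a) = σB (θ a) :=
  torus_not_isomorphic_to_A_star_general k L hL σA hσA σB hσB
end
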